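/- arXiv:2603.10603 — 2 statements merged into one kernel-verified Lean document; each statement's English description precedes it below -/
import Mathlib

section
/- For every integer n ≥ 6, ISI(C_n^*) > ISI(B_n^*), where ISI(C_n^*) = (n−4)f(1,n−2) + f(2,n−2) + f(3,n−2) + f(2,3) + f(1,3) and ISI(B_n^*) = (n−4)f(1,n−2) + 2f(2,n−2) + 2f(2,2), with f(x,y) = xy/(x+y). Equivalently, f(3,n−2) − f(2,n−2) + f(2,3) + f(1,3) − 2f(2,2) > 0. -/
noncomputable def f (x y : ℝ) : ℝ := x * y / (x + y)

/-- For n ≥ 6, ISI(C_n^*) > ISI(B_n^*). -/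
theorem isi_Cn_gt_Bn (n : ℕ) (hn : 6 ≤ n) :
    ((n : ℝ) - 4) * f 1 ((n : ℝ) - 2) + f 2 ((n : ℝ) - 2) + f 3 ((n : ℝ) - 2)
        + f 2 3 + f 1 3 >
      ((n : ℝ) - 4) * f 1 ((n : ℝ) - 2) + 2 * f 2 ((n : ℝ) - 2) + 2 * f 2 2 := by
  have hn' : (6 : ℝ) ≤ (n : ℝ) := by exact_mod_cast hn
  set x : ℝ := (n : ℝ) - 2 with hx
  have hx4 : (4 : ℝ) ≤ x := by simp [hx]; linarith
  have hb : (0:ℝ) < 2 + x := by linarith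
  have hc : (0:ℝ) < 3 + x := by linarith
  simp only [f]
  have e1 : 3 * x / (3 + x) - 2 * x / (2 + x) = x ^ 2 / ((2 + x) * (3 + x)) := by
    field_simp
    ring
  have e2 : (1:ℝ)/20 < x ^ 2 / ((2 + x) * (3 + x)) := by
    rw [div_lt_div_iff₀ (by norm_num) (by positivity)]
    nlinarith
  have c1 : (2:ℝ) * 3 / (2 + 3) = 6/5 := by norm_num
  have c2 : (1:ℝ) * 3 / (1 + 3) = 3/4 := by norm_num
  have c3 : (2:ℝ) * 2 / (2 + 2) = 1 := by norm_num
  rw [c1, c2, c3]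
  linarith
end

section
/- For every integer n ≥ 6, ISI(C_n^*) − ISI(D_n^*) = f(1,n−2) + f(3,n−2) − 2f(2,n−2) + f(2,3) + f(1,3) − f(2,2) − f(1,2) > 0, where f(x,y) = xy/(x+y), ISI(C_n^*) = (n−4)f(1,n−2) + f(2,n−2) + f(3,n−2) + f(2,3) + f(1,3), and ISI(D_n^*) = (n−5)f(1,n−2) + 3f(2,n−2) + f(2,2) + f(1,2). -/
/-- For n ≥ 6, ISI(C_n^*) − ISI(D_n^*) equals
f(1,n−2) + f(3,n−2) − 2f(2,n−2) + f(2,3) + f(1,3) − f(2,2) − f(1,2), which is positive. -/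
theorem isi_Cn_gt_Dn (n : ℕ) (hn : 6 ≤ n) :
    (((n : ℝ) - 4) * f 1 ((n : ℝ) - 2) + f 2 ((n : ℝ) - 2) + f 3 ((n : ℝ) - 2)
          + f 2 3 + f 1 3)
      - (((n : ℝ) - 5) * f 1 ((n : ℝ) - 2) + 3 * f 2 ((n : ℝ) - 2) + f 2 2 + f 1 2)
      = f 1 ((n : ℝ) - 2) + f 3 ((n : ℝ) - 2) - 2 * f 2 ((n : ℝ) - 2)
          + f 2 3 + f 1 3 - f 2 2 - f 1 2 ∧
    f 1 ((n : ℝ) - 2) + f 3 ((n : ℝ) - 2) - 2 * f 2 ((n : ℝ) - 2)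
          + f 2 3 + f 1 3 - f 2 2 - f 1 2 > 0 := by
  have hn4 : (4:ℝ) ≤ (n:ℝ) - 2 := by
    have : (6:ℝ) ≤ (n:ℝ) := by exact_mod_cast hn
    linarith
  set t : ℝ := (n:ℝ) - 2 with ht
  have h1 : (1:ℝ) + t > 0 := by linarith
  have h2 : (2:ℝ) + t > 0 := by linarith
  have h3 : (3:ℝ) + t > 0 := by linarith
  constructor
  · ring
  · simp only [f]
    rw [gt_iff_lt, ← sub_pos] at *
    have key : 1 * t / (1 + t) + 3 * t / (3 + t) - 2 * (2 * t / (2 + t))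
        + 2*3/((2:ℝ)+3) + 1*3/((1:ℝ)+3) - 2*2/((2:ℝ)+2) - 1*2/((1:ℝ)+2) - 0
        = (17*t^3 - 18*t^2 + 187*t + 102) / (60 * ((1+t)*(2+t)*(3+t))) := by
      field_simp
      ring
    rw [key]
    apply div_pos
    · nlinarith
    · positivity
end
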